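/- Let p : Fin n → ℝ be injective. Then the minimum spanning tree of the complete graph on Fin n with edge weights w(u,s) = |p u - p s| is unique (assuming all weights of candidate edges are distinct, which holds when the gaps between consecutive sorted values of p are pairwise distinct), and it is a path graph: the tree obtained by sorting the vertices by p-value and connecting consecutive vertices. -/

import Mathlib

/-- `u` and `v` are consecutive in the `p`-ordering: `p u < p v` with no value
strictly in between. -/
def Consec {n : ℕ} (p : Fin n → ℝ) (u v : Fin n) : Prop :=
  p u < p v ∧ ∀ g, ¬ (p u < p g ∧ p g < p v)

/-- Total edge weight of a graph on `Fin n` with weights `|p u - p s|`. -/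
noncomputable def graphWeight {n : ℕ} (p : Fin n → ℝ) (G : SimpleGraph (Fin n)) : ℝ :=
  ∑ e ∈ (Set.toFinite G.edgeSet).toFinset,
    Sym2.lift ⟨fun u s => |p u - p s|, fun _ _ => abs_sub_comm _ _⟩ e

open SimpleGraph Finset

-- consec iff succ for strict mono
lemma consec_iff {n : ℕ} {f : Fin (n+1) → ℝ} (hf : StrictMono f) (u v : Fin (n+1)) :
    Consec f u v ↔ (u : ℕ) + 1 = (v : ℕ) := by
  constructor
  · rintro ⟨hlt, hno⟩
    have huv : u < v := hf.lt_iff_lt.mp hlt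
    by_contra h
    have hv : (u : ℕ) + 1 < (v : ℕ) := by
      have := huv
      rw [Fin.lt_def] at this; omega
    have hg : ((⟨(u : ℕ) + 1, by omega⟩ : Fin (n+1)) : ℕ) = (u:ℕ)+1 := rfl
    exact hno ⟨(u : ℕ) + 1, by omega⟩
      ⟨hf (by rw [Fin.lt_def]; omega), hf (by rw [Fin.lt_def]; omega)⟩
  · intro h
    refine ⟨hf (by rw [Fin.lt_def]; omega), ?_⟩
    rintro g ⟨h1, h2⟩
    have g1 : u < g := hf.lt_iff_lt.mp h1
    have g2 : g < v := hf.lt_iff_lt.mp h2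
    rw [Fin.lt_def] at g1 g2
    omega

lemma fromRel_consec_eq {n : ℕ} {f : Fin (n+1) → ℝ} (hf : StrictMono f) :
    SimpleGraph.fromRel (Consec f) = pathGraph (n+1) := by
  ext a b
  simp only [fromRel_adj, pathGraph_adj, consec_iff hf]
  constructor
  · rintro ⟨_, h | h⟩
    · exact Or.inl h
    · exact Or.inr h
  · intro h
    refine ⟨?_, h⟩
    rintro rfl
    omega


lemma cross_walk {n : ℕ} {G : SimpleGraph (Fin (n+1))} {k : ℕ} :
    ∀ {x y : Fin (n+1)} (w : G.Walk x y), (x : ℕ) ≤ k → k < (y : ℕ) →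
    ∃ a b : Fin (n+1), s(a,b) ∈ w.edges ∧ (a : ℕ) ≤ k ∧ k < (b : ℕ) := by
  intro x y w
  induction w with
  | nil => intro hx hy; omega
  | @cons u z y h w ih =>
    intro hx hy
    by_cases hz : (z : ℕ) ≤ k
    · obtain ⟨a, b, hm, h1, h2⟩ := ih hz hy
      exact ⟨a, b, by simp [hm], h1, h2⟩
    · exact ⟨u, z, by simp, hx, by omega⟩

lemma pathGraph_isTree (n : ℕ) : (pathGraph (n+1)).IsTree := by
  refine ⟨pathGraph_connected n, ?_⟩
  rw [isAcyclic_iff_forall_adj_isBridge]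
  intro v w hvw
  rw [isBridge_iff_adj_and_forall_walk_mem_edges]
  rw [pathGraph_adj] at hvw
  rcases hvw with h | h
  · intro p
    obtain ⟨a, b, hm, h1, h2⟩ := cross_walk p (le_refl (v : ℕ)) (by omega)
    have hadj : (pathGraph (n+1)).Adj a b := p.adj_of_mem_edges hm
    rw [pathGraph_adj] at hadj
    have hav : a = v := by apply Fin.ext; omega
    have hbw : b = w := by apply Fin.ext; omega
    subst hav hbw; exact hm
  · intro p
    obtain ⟨a, b, hm, h1, h2⟩ := cross_walk p.reverse (le_refl (w : ℕ)) (by omega)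
    have hadj : (pathGraph (n+1)).Adj a b := Walk.adj_of_mem_edges _ hm
    rw [pathGraph_adj] at hadj
    have hav : a = w := by apply Fin.ext; omega
    have hbw : b = v := by apply Fin.ext; omega
    rw [Walk.edges_reverse, List.mem_reverse] at hm
    subst hav hbw
    rw [Sym2.eq_swap]; exact hm

variable {n : ℕ}

noncomputable def EF (G : SimpleGraph (Fin (n+1))) : Finset (Sym2 (Fin (n+1))) :=
  (Set.toFinite G.edgeSet).toFinset

lemma mem_EF {G : SimpleGraph (Fin (n+1))} {e} : e ∈ EF G ↔ e ∈ G.edgeSet :=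
  Set.Finite.mem_toFinset _

noncomputable def FF (f : Fin (n+1) → ℝ) (k : ℕ) : ℝ := f ⟨min k n, by omega⟩

lemma FF_eq (f : Fin (n+1) → ℝ) {k : ℕ} (hk : k ≤ n) : FF f k = f ⟨k, by omega⟩ := by
  unfold FF; congr 1; exact Fin.ext (min_eq_left hk)

noncomputable def Gp (f : Fin (n+1) → ℝ) (k : ℕ) : ℝ := FF f (k+1) - FF f k

lemma Gp_pos {f : Fin (n+1) → ℝ} (hf : StrictMono f) {k : ℕ} (hk : k < n) :
    0 < Gp f k := by
  unfold Gp
  rw [FF_eq f (by omega), FF_eq f (by omega)]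
  exact sub_pos.mpr (hf (by rw [Fin.lt_def]; simp))

def spn : Sym2 (Fin (n+1)) → Finset ℕ :=
  Sym2.lift ⟨fun a b => Finset.Ico (min (a:ℕ) (b:ℕ)) (max (a:ℕ) (b:ℕ)),
    fun a b => by simp only []; rw [min_comm, max_comm]⟩

lemma spn_subset (e : Sym2 (Fin (n+1))) : spn e ⊆ Finset.range n := by
  induction e with
  | _ a b =>
    intro k hk
    simp only [spn, Sym2.lift_mk, Finset.mem_Ico] at hk
    have ha := a.isLt
    have hb := b.isLt
    simp only [Finset.mem_range]
    rcases max_cases (a:ℕ) (b:ℕ) with ⟨h, _⟩ | ⟨h, _⟩ <;> omega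

lemma wt_half {f : Fin (n+1) → ℝ} (hf : StrictMono f) {a b : Fin (n+1)}
    (hab : (a:ℕ) ≤ (b:ℕ)) : |f a - f b| = ∑ k ∈ spn s(a,b), Gp f k := by
  have hmin : min (a:ℕ) (b:ℕ) = (a:ℕ) := min_eq_left hab
  have hmax : max (a:ℕ) (b:ℕ) = (b:ℕ) := max_eq_right hab
  have hspn : spn s(a,b) = Finset.Ico (a:ℕ) (b:ℕ) := by
    simp only [spn, Sym2.lift_mk, hmin, hmax]
  rw [hspn]
  have hstep : ∑ k ∈ Finset.Ico (a:ℕ) (b:ℕ), Gp f k = FF f b - FF f a := by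
    rw [Finset.sum_Ico_eq_sub _ hab]
    unfold Gp
    rw [Finset.sum_range_sub (FF f), Finset.sum_range_sub (FF f)]
    ring
  rw [hstep, FF_eq f (Nat.lt_succ_iff.mp b.isLt), FF_eq f (Nat.lt_succ_iff.mp a.isLt)]
  have : f a ≤ f b := hf.monotone (by rwa [Fin.le_def])
  have h1 : f ⟨(b:ℕ), by omega⟩ = f b := by congr
  have h2 : f ⟨(a:ℕ), by omega⟩ = f a := by congr
  rw [h1, h2, abs_sub_comm, abs_of_nonneg (by linarith)]

lemma wt_eq {f : Fin (n+1) → ℝ} (hf : StrictMono f) (e : Sym2 (Fin (n+1))) :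
    Sym2.lift ⟨fun u s => |f u - f s|, fun _ _ => abs_sub_comm _ _⟩ e
      = ∑ k ∈ spn e, Gp f k := by
  induction e with
  | _ a b =>
    rcases le_total (a:ℕ) (b:ℕ) with h | h
    · simpa using wt_half hf h
    · rw [Sym2.eq_swap]
      simpa using wt_half hf h

noncomputable def cc (G : SimpleGraph (Fin (n+1))) (k : ℕ) : ℕ :=
  ((EF G).filter (fun e => k ∈ spn e)).card


lemma weight_eq {f : Fin (n+1) → ℝ} (hf : StrictMono f) (G : SimpleGraph (Fin (n+1))) :
    graphWeight f G = ∑ k ∈ Finset.range n, (cc G k : ℝ) * Gp f k := by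
  classical
  have h1 : graphWeight f G = ∑ e ∈ EF G, ∑ k ∈ spn e, Gp f k :=
    Finset.sum_congr rfl (fun e _ => wt_eq hf e)
  rw [h1]
  have h2 : ∀ e ∈ EF G, ∑ k ∈ spn e, Gp f k
      = ∑ k ∈ Finset.range n, if k ∈ spn e then Gp f k else 0 := by
    intro e _
    rw [Finset.sum_ite_mem, Finset.inter_eq_right.mpr (spn_subset e)]
  rw [Finset.sum_congr rfl h2, Finset.sum_comm]
  refine Finset.sum_congr rfl (fun k _ => ?_)
  rw [← Finset.sum_filter, Finset.sum_const, cc, nsmul_eq_mul]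

lemma double_count (G : SimpleGraph (Fin (n+1))) :
    ∑ k ∈ Finset.range n, cc G k = ∑ e ∈ EF G, (spn e).card := by
  classical
  unfold cc
  simp_rw [Finset.card_filter]
  rw [Finset.sum_comm]
  refine Finset.sum_congr rfl (fun e _ => ?_)
  rw [Finset.sum_ite_mem, Finset.inter_eq_right.mpr (spn_subset e), Finset.card_eq_sum_ones]

lemma cc_ge_one {G : SimpleGraph (Fin (n+1))} (hG : G.Connected) {k : ℕ} (hk : k < n) :
    1 ≤ cc G k := by
  obtain ⟨w⟩ := hG ⟨k, by omega⟩ ⟨k+1, by omega⟩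
  obtain ⟨a, b, hm, h1, h2⟩ := cross_walk (k := k) w (by simp) (by simp [Nat.lt_succ_iff])
  have he : s(a,b) ∈ G.edgeSet := w.edges_subset_edgeSet hm
  have hk' : k ∈ spn s(a,b) := by
    simp only [spn, Sym2.lift_mk, Finset.mem_Ico]
    constructor
    · exact le_trans (min_le_left _ _) h1
    · exact lt_of_lt_of_le h2 (le_max_right _ _)
  rw [cc, Nat.one_le_iff_ne_zero, ← Nat.pos_iff_ne_zero, Finset.card_pos]
  exact ⟨s(a,b), Finset.mem_filter.mpr ⟨mem_EF.mpr he, hk'⟩⟩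

lemma spn_card_pos {G : SimpleGraph (Fin (n+1))} {e} (he : e ∈ G.edgeSet) :
    1 ≤ (spn e).card := by
  induction e with
  | _ a b =>
    have hne : a ≠ b := (G.ne_of_adj he)
    have : (a:ℕ) ≠ (b:ℕ) := fun h => hne (Fin.ext h)
    simp only [spn, Sym2.lift_mk, Nat.card_Ico]
    rcases le_or_gt (a:ℕ) (b:ℕ) with h | h
    · rw [min_eq_left h, max_eq_right h]; omega
    · rw [min_eq_right h.le, max_eq_left h.le]; omega

lemma cc_path {k : ℕ} (hk : k < n) : cc (pathGraph (n+1)) k = 1 := by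
  rw [cc]
  have : (EF (pathGraph (n+1))).filter (fun e => k ∈ spn e)
      = {s((⟨k, by omega⟩ : Fin (n+1)), (⟨k+1, by omega⟩ : Fin (n+1)))} := by
    ext e
    simp only [Finset.mem_filter, Finset.mem_singleton, mem_EF]
    constructor
    · rintro ⟨he, hke⟩
      induction e with
      | _ a b =>
        rw [mem_edgeSet, pathGraph_adj] at he
        simp only [spn, Sym2.lift_mk, Finset.mem_Ico] at hke
        rcases he with h | h
        · have hmin : min (a:ℕ) (b:ℕ) = (a:ℕ) := min_eq_left (by omega)
          have hmax : max (a:ℕ) (b:ℕ) = (b:ℕ) := max_eq_right (by omega)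
          rw [hmin, hmax] at hke
          have ha : a = ⟨k, by omega⟩ := Fin.ext (by simp; omega)
          have hb : b = ⟨k+1, by omega⟩ := Fin.ext (by simp; omega)
          exact congrArg₂ (fun x y => s(x,y)) ha hb
        · have hmin : min (a:ℕ) (b:ℕ) = (b:ℕ) := min_eq_right (by omega)
          have hmax : max (a:ℕ) (b:ℕ) = (a:ℕ) := max_eq_left (by omega)
          rw [hmin, hmax] at hke
          have ha : a = ⟨k+1, by omega⟩ := Fin.ext (by simp; omega)
          have hb : b = ⟨k, by omega⟩ := Fin.ext (by simp; omega)
          rw [Sym2.eq_swap]; exact congrArg₂ (fun x y => s(x,y)) hb ha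
    · rintro rfl
      constructor
      · rw [mem_edgeSet, pathGraph_adj]; left; simp
      · simp only [spn, Sym2.lift_mk]
        simp [Nat.min_def, Nat.max_def]
  rw [this, Finset.card_singleton]

theorem key {n : ℕ} {f : Fin (n+1) → ℝ} (hf : StrictMono f) :
    (pathGraph (n+1)).IsTree ∧ ∀ G : SimpleGraph (Fin (n+1)), G.IsTree →
      (graphWeight f (pathGraph (n+1)) ≤ graphWeight f G ∧
        (graphWeight f G = graphWeight f (pathGraph (n+1)) → G = pathGraph (n+1))) := by
  classical
  refine ⟨pathGraph_isTree n, fun G hG => ?_⟩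
  have hWp : graphWeight f (pathGraph (n+1)) = ∑ k ∈ Finset.range n, Gp f k := by
    rw [weight_eq hf]
    refine Finset.sum_congr rfl (fun k hk => ?_)
    rw [cc_path (Finset.mem_range.mp hk)]; simp
  have hWG : graphWeight f G = ∑ k ∈ Finset.range n, (cc G k : ℝ) * Gp f k := weight_eq hf G
  have hterm : ∀ k ∈ Finset.range n, Gp f k ≤ (cc G k : ℝ) * Gp f k := by
    intro k hk
    have h1 : (1 : ℝ) ≤ (cc G k : ℝ) := by
      exact_mod_cast cc_ge_one hG.isConnected (Finset.mem_range.mp hk)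
    have h2 := Gp_pos hf (Finset.mem_range.mp hk)
    nlinarith
  have hle : graphWeight f (pathGraph (n+1)) ≤ graphWeight f G := by
    rw [hWp, hWG]; exact Finset.sum_le_sum hterm
  refine ⟨hle, fun heq => ?_⟩
  have hcc : ∀ k ∈ Finset.range n, cc G k = 1 := by
    by_contra hco
    push_neg at hco
    obtain ⟨k, hk, hne⟩ := hco
    have hlt : ∑ k ∈ Finset.range n, Gp f k
        < ∑ k ∈ Finset.range n, (cc G k : ℝ) * Gp f k := by
      refine Finset.sum_lt_sum hterm ⟨k, hk, ?_⟩
      have h1 : 2 ≤ cc G k := by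
        have := cc_ge_one hG.isConnected (Finset.mem_range.mp hk); omega
      have h1' : (2 : ℝ) ≤ (cc G k : ℝ) := by exact_mod_cast h1
      have h2 := Gp_pos hf (Finset.mem_range.mp hk)
      nlinarith
    rw [← hWp, ← hWG] at hlt
    linarith
  have hEFeq : ∀ H : SimpleGraph (Fin (n+1)), EF H = H.edgeFinset := by
    intro H; ext e; simp [mem_EF, SimpleGraph.mem_edgeFinset]
  have hcard : (EF G).card = n := by
    have h := hG.card_edgeFinset
    rw [Fintype.card_fin] at h
    rw [hEFeq]
    omega
  have hsum : ∑ e ∈ EF G, (spn e).card = n := by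
    rw [← double_count, Finset.sum_congr rfl hcc, Finset.sum_const, Finset.card_range,
      smul_eq_mul, mul_one]
  have hone : ∀ e ∈ EF G, (spn e).card = 1 := by
    by_contra hco
    push_neg at hco
    obtain ⟨e, he, hne⟩ := hco
    have h2 : 2 ≤ (spn e).card := by
      have := spn_card_pos (mem_EF.mp he); omega
    have hlt : (EF G).card < ∑ e ∈ EF G, (spn e).card := by
      rw [Finset.card_eq_sum_ones]
      exact Finset.sum_lt_sum (fun e' he' => spn_card_pos (mem_EF.mp he')) ⟨e, he, by omega⟩
    omega
  have hsub : EF G ⊆ EF (pathGraph (n+1)) := by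
    intro e he
    have hcard1 := hone e he
    have headj := mem_EF.mp he
    rw [mem_EF]
    revert hcard1 headj
    induction e with
    | _ a b =>
      intro hcard1 headj
      rw [SimpleGraph.mem_edgeSet] at headj ⊢
      rw [pathGraph_adj]
      have hne : (a:ℕ) ≠ (b:ℕ) := fun h => (G.ne_of_adj headj) (Fin.ext h)
      simp only [spn, Sym2.lift_mk, Nat.card_Ico] at hcard1
      rcases le_total (a:ℕ) (b:ℕ) with h | h
      · rw [min_eq_left h, max_eq_right h] at hcard1; omega
      · rw [min_eq_right h, max_eq_left h] at hcard1; omega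
  have hcardP : (EF (pathGraph (n+1))).card = n := by
    have h := (pathGraph_isTree n).card_edgeFinset
    rw [Fintype.card_fin] at h
    rw [hEFeq]
    omega
  have hEq : EF G = EF (pathGraph (n+1)) :=
    Finset.eq_of_subset_of_card_le hsub (by omega)
  have : G.edgeSet = (pathGraph (n+1)).edgeSet := by
    ext e
    rw [← mem_EF, ← mem_EF, hEq]
  exact SimpleGraph.edgeSet_inj.mp this

lemma iso_isTree {V W : Type*} {G : SimpleGraph V} {G' : SimpleGraph W} (φ : G ≃g G')
    (h : G.IsTree) : G'.IsTree := by
  refine ⟨φ.connected_iff.mp h.isConnected, ?_⟩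
  intro v c hc
  have hinj : Function.Injective φ.symm.toHom := φ.symm.toEquiv.injective
  exact h.IsAcyclic (c.map φ.symm.toHom)
    ((SimpleGraph.Walk.map_isCycle_iff_of_injective hinj).mpr hc)

noncomputable def comap_iso {V W : Type*} (σ : V ≃ W) (H : SimpleGraph W) :
    H.comap ⇑σ ≃g H :=
  { toEquiv := σ, map_rel_iff' := Iff.rfl }

lemma comap_inj {V W : Type*} (σ : V ≃ W) {H K : SimpleGraph W}
    (h : H.comap ⇑σ = K.comap ⇑σ) : H = K := by
  ext u v
  have := SimpleGraph.ext_iff.mp h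
  have h2 := congr_fun (congr_fun (congrArg SimpleGraph.Adj h) (σ.symm u)) (σ.symm v)
  simpa using h2

lemma weight_comap {n : ℕ} (p : Fin (n+1) → ℝ) (σ : Equiv.Perm (Fin (n+1)))
    (H : SimpleGraph (Fin (n+1))) :
    graphWeight p H = graphWeight (p ∘ ⇑σ) (H.comap ⇑σ) := by
  classical
  rw [graphWeight, graphWeight]
  refine Finset.sum_nbij' (fun e => Sym2.map ⇑σ.symm e) (fun e => Sym2.map ⇑σ e)
    ?_ ?_ ?_ ?_ ?_
  · intro e he
    rw [Set.Finite.mem_toFinset] at he ⊢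
    revert he
    induction e with
    | _ a b =>
      intro he
      simp only [Sym2.map_pair_eq, SimpleGraph.mem_edgeSet, SimpleGraph.comap_adj] at he ⊢
      simpa using he
  · intro e he
    rw [Set.Finite.mem_toFinset] at he ⊢
    revert he
    induction e with
    | _ a b =>
      intro he
      simp only [Sym2.map_pair_eq, SimpleGraph.mem_edgeSet, SimpleGraph.comap_adj] at he ⊢
      simpa using he
  · intro e _
    induction e with
    | _ a b => simp [Sym2.map_pair_eq]
  · intro e _
    induction e with
    | _ a b => simp [Sym2.map_pair_eq]
  · intro e _
    induction e with
    | _ a b => simp [Sym2.map_pair_eq]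


/-- If `p` is injective and the gaps between consecutive sorted
values are pairwise distinct, then the graph connecting vertices consecutive in
the `p`-order is the unique minimum spanning tree. -/
theorem stmt_6 (n : ℕ) (p : Fin (n + 1) → ℝ) (hinj : Function.Injective p)
    (hgap : ∀ u v u' v' : Fin (n + 1), Consec p u v → Consec p u' v' →
      |p v - p u| = |p v' - p u'| → u = u' ∧ v = v') :
    (SimpleGraph.fromRel (Consec p)).IsTree ∧
    ∀ G : SimpleGraph (Fin (n + 1)), G.IsTree →
      (graphWeight p (SimpleGraph.fromRel (Consec p)) ≤ graphWeight p G ∧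
        (graphWeight p G = graphWeight p (SimpleGraph.fromRel (Consec p)) →
          G = SimpleGraph.fromRel (Consec p))) := by
  classical
  set σ : Equiv.Perm (Fin (n+1)) := Tuple.sort p with hσ
  set f : Fin (n+1) → ℝ := p ∘ ⇑σ with hfdef
  have hf : StrictMono f :=
    (Tuple.monotone_sort p).strictMono_of_injective (hinj.comp σ.injective)
  obtain ⟨hT, hmin⟩ := key hf
  set P : SimpleGraph (Fin (n+1)) := SimpleGraph.fromRel (Consec p) with hPdef
  have hconsec : ∀ a b : Fin (n+1), Consec p (σ a) (σ b) ↔ Consec f a b := by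
    intro a b
    constructor
    · rintro ⟨h1, h2⟩
      exact ⟨h1, fun g hg => h2 (σ g) hg⟩
    · rintro ⟨h1, h2⟩
      refine ⟨h1, fun g hg => h2 (σ.symm g) ?_⟩
      have : f (σ.symm g) = p g := by
        simp [hfdef]
      rw [this]
      exact hg
  have hcomap : P.comap ⇑σ = pathGraph (n+1) := by
    rw [← fromRel_consec_eq hf]
    ext a b
    simp only [SimpleGraph.comap_adj, hPdef, SimpleGraph.fromRel_adj, hconsec,
      ne_eq, EmbeddingLike.apply_eq_iff_eq]
  have hwP : graphWeight p P = graphWeight f (pathGraph (n+1)) := by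
    rw [weight_comap p σ P, hcomap]
  constructor
  · have hT' : (P.comap ⇑σ).IsTree := by rw [hcomap]; exact hT
    exact iso_isTree (comap_iso σ P) hT'
  · intro G hGt
    have hG' : (G.comap ⇑σ).IsTree := by
      refine ⟨?_, ?_⟩
      · exact (comap_iso σ G).connected_iff.mpr hGt.isConnected
      · intro v c hc
        have hinj2 : Function.Injective (comap_iso σ G).toHom :=
          (comap_iso σ G).toEquiv.injective
        exact hGt.IsAcyclic (c.map (comap_iso σ G).toHom)
          ((SimpleGraph.Walk.map_isCycle_iff_of_injective hinj2).mpr hc)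
    obtain ⟨h1, h2⟩ := hmin (G.comap ⇑σ) hG'
    have hwG : graphWeight p G = graphWeight f (G.comap ⇑σ) := weight_comap p σ G
    refine ⟨?_, ?_⟩
    · rw [hwP, hwG]; exact h1
    · intro heq
      rw [hwP, hwG] at heq
      have := h2 heq
      rw [← hcomap] at this
      exact comap_inj σ this
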